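/- The connection formula Ai(z) = e^{πi/3}·Ai(z e^{-2πi/3}) + e^{-πi/3}·Ai(z e^{2πi/3}) holds for all complex z. -/
import Mathlib


open Complex

/-- Entire series `f(z) = ∑ (∏_{k<n} (3k+1)) z^{3n}/(3n)!` from the Maclaurin expansion
of the Airy function. -/
noncomputable def airyf (z : ℂ) : ℂ :=
  ∑' n : ℕ, (∏ k ∈ Finset.range n, ((3 : ℂ) * k + 1)) * z ^ (3 * n) / (3 * n).factorial

/-- Entire series `g(z) = ∑ (∏_{k<n} (3k+2)) z^{3n+1}/(3n+1)!`. -/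
noncomputable def airyg (z : ℂ) : ℂ :=
  ∑' n : ℕ, (∏ k ∈ Finset.range n, ((3 : ℂ) * k + 2)) * z ^ (3 * n + 1) / (3 * n + 1).factorial

/-- The Airy function `Ai`, the entire solution of `w'' = z w` with the standard
normalization `Ai(0) = 3^{-2/3}/Γ(2/3)`, `Ai'(0) = -3^{-1/3}/Γ(1/3)`. -/
noncomputable def Ai (z : ℂ) : ℂ :=
  (3 : ℂ) ^ (-(2 : ℂ) / 3) / Complex.Gamma (2 / 3) * airyf z
    - (3 : ℂ) ^ (-(1 : ℂ) / 3) / Complex.Gamma (1 / 3) * airyg z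

/-- The Airy function `Bi` with the standard normalization. -/
noncomputable def Bi (z : ℂ) : ℂ :=
  (3 : ℂ) ^ (-(1 : ℂ) / 6) / Complex.Gamma (2 / 3) * airyf z
    + (3 : ℂ) ^ ((1 : ℂ) / 6) / Complex.Gamma (1 / 3) * airyg z

/-- The function `𝒜i(u,z)` of Eq. (3.8) of the paper. -/
noncomputable def scrAi (u : ℝ) (z : ℂ) : ℂ :=
  Complex.exp ((3 * u - 1) * Real.pi * I / 6) * Ai (z * Complex.exp (-(2 * Real.pi * I) / 3))
    + Complex.exp (-((3 * u - 1) * Real.pi * I) / 6) * Ai (z * Complex.exp (2 * Real.pi * I / 3))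


lemma airyf_mul_cube_root {c : ℂ} (hc : c ^ 3 = 1) (z : ℂ) : airyf (z * c) = airyf z := by
  unfold airyf
  refine tsum_congr fun n => ?_
  rw [mul_pow, pow_mul c, hc, one_pow, mul_one]

lemma airyg_mul_cube_root {c : ℂ} (hc : c ^ 3 = 1) (z : ℂ) :
    airyg (z * c) = c * airyg z := by
  unfold airyg
  rw [← tsum_mul_left]
  refine tsum_congr fun n => ?_
  rw [mul_pow, pow_succ c, pow_mul c, hc, one_pow, one_mul]
  ring

lemma Ai_mul_cube_root {c : ℂ} (hc : c ^ 3 = 1) (z : ℂ) :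
    Ai (z * c) = (3 : ℂ) ^ (-(2 : ℂ) / 3) / Complex.Gamma (2 / 3) * airyf z
      - (3 : ℂ) ^ (-(1 : ℂ) / 3) / Complex.Gamma (1 / 3) * (c * airyg z) := by
  unfold Ai
  rw [airyf_mul_cube_root hc, airyg_mul_cube_root hc]

theorem Ai_connection (z : ℂ) :
    Ai z = Complex.exp (Real.pi * I / 3) * Ai (z * Complex.exp (-(2 * Real.pi * I) / 3))
      + Complex.exp (-(Real.pi * I) / 3) * Ai (z * Complex.exp (2 * Real.pi * I / 3)) := by
  have h1 : Complex.exp (-(2 * Real.pi * I) / 3) ^ 3 = 1 := by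
    rw [← Complex.exp_nat_mul]
    push_cast
    rw [show (3 : ℂ) * (-(2 * Real.pi * I) / 3) = -(2 * Real.pi * I) by ring,
      Complex.exp_neg, Complex.exp_two_pi_mul_I]
    norm_num
  have h2 : Complex.exp (2 * Real.pi * I / 3) ^ 3 = 1 := by
    rw [← Complex.exp_nat_mul]
    push_cast
    rw [show (3 : ℂ) * (2 * Real.pi * I / 3) = 2 * Real.pi * I by ring,
      Complex.exp_two_pi_mul_I]
  rw [Ai_mul_cube_root h1, Ai_mul_cube_root h2]
  have hsum : Complex.exp (Real.pi * I / 3) + Complex.exp (-(Real.pi * I) / 3) = 1 := by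
    have hc : Complex.cos ((Real.pi : ℂ) / 3) = 1 / 2 := by
      rw [show ((Real.pi : ℂ) / 3) = ((Real.pi / 3 : ℝ) : ℂ) by push_cast; ring,
        ← Complex.ofReal_cos, Real.cos_pi_div_three]
      norm_num
    have e1 := Complex.exp_mul_I ((Real.pi : ℂ) / 3)
    have e2 := Complex.exp_mul_I (-((Real.pi : ℂ) / 3))
    rw [Complex.cos_neg, Complex.sin_neg] at e2
    rw [show Real.pi * I / 3 = (Real.pi : ℂ) / 3 * I by ring,
      show -(Real.pi * I) / 3 = -((Real.pi : ℂ) / 3) * I by ring]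
    linear_combination e1 + e2 + 2 * hc
  have hsum2 : Complex.exp (Real.pi * I / 3) * Complex.exp (-(2 * Real.pi * I) / 3)
      + Complex.exp (-(Real.pi * I) / 3) * Complex.exp (2 * Real.pi * I / 3) = 1 := by
    rw [← Complex.exp_add, ← Complex.exp_add,
      show Real.pi * I / 3 + -(2 * Real.pi * I) / 3 = -(Real.pi * I) / 3 by ring,
      show -(Real.pi * I) / 3 + 2 * Real.pi * I / 3 = Real.pi * I / 3 by ring, add_comm]
    exact hsum
  unfold Ai
  linear_combination (-(3 : ℂ) ^ (-(2 : ℂ) / 3) / Complex.Gamma (2 / 3) * airyf z) * hsum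
    + ((3 : ℂ) ^ (-(1 : ℂ) / 3) / Complex.Gamma (1 / 3) * airyg z) * hsum2
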